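/- arXiv:2407.06471 — 3 statements merged into one kernel-verified Lean document; each statement's English description precedes it below -/
import Mathlib

section
/- Let q be a composition of n and μ a partition of n. If the Young character value φ^q(μ) is nonzero, then μ is a weak refinement of q, i.e. μ ≼ q. -/
open scoped Classical TensorProduct

namespace Descent

/-- A list of positive integers summing to `n`: a composition of `n`. -/
def IsComposition (n : ℕ) (l : List ℕ) : Prop :=
  (∀ x ∈ l, 0 < x) ∧ l.sum = n

/-- `Xi F n q` is the element `Ξ^q` of the group algebra `F[S_n]`: the sum of the
minimal-length representatives of the right cosets of the Young subgroup `S_q` in `S_n`,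
i.e. the sum of all permutations that are increasing on each of the consecutive intervals
of lengths `q₀, q₁, …`. -/
noncomputable def Xi (O : Type) [CommRing O] (n : ℕ) (l : List ℕ) :
    MonoidAlgebra O (Equiv.Perm (Fin n)) :=
  ∑ σ ∈ Finset.univ.filter (fun σ : Equiv.Perm (Fin n) =>
      ∀ i j : Fin n, i < j →
        (∃ k, (l.take k).sum ≤ (i : ℕ) ∧ (j : ℕ) < (l.take (k + 1)).sum) →
        σ i < σ j),
    MonoidAlgebra.single σ 1

/-- The descent algebra `D_n(O)`: the unital subalgebra of `O[S_n]` generated by the elements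
`Ξ^q`, for `q` a composition of `n`; by Solomon's theorem it coincides with their `O`-linear
span. -/
noncomputable def descentAlgebra (O : Type) [CommRing O] (n : ℕ) :
    Subalgebra O (MonoidAlgebra O (Equiv.Perm (Fin n))) :=
  Algebra.adjoin O {x | ∃ l, IsComposition n l ∧ x = Xi O n l}

theorem xi_mem {O : Type} [CommRing O] {n : ℕ} {l : List ℕ} (hl : IsComposition n l) :
    Xi O n l ∈ descentAlgebra O n :=
  Algebra.subset_adjoin ⟨l, hl, rfl⟩

/-- A partition of `n`: a weakly decreasing composition of `n`. -/
def IsPartition (n : ℕ) (l : List ℕ) : Prop :=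
  IsComposition n l ∧ l.Pairwise (· ≥ ·)

/-- A partition is `p`-regular if no part occurs `p` or more times. -/
def IsPRegular (p : ℕ) (l : List ℕ) : Prop :=
  ∀ x ∈ l, l.count x < p

/-- The Young character value `φ^q(μ)`: the number of functions `f` from the (indices of the)
parts of `μ` to the (indices of the) parts of `q` such that, for every `j`, the parts of `μ`
mapped to `j` sum to `q_j`. -/
noncomputable def youngChar (q μ : List ℕ) : ℕ :=
  (Finset.univ.filter (fun f : Fin μ.length → Fin q.length =>
    ∀ j : Fin q.length,
      (∑ i ∈ Finset.univ.filter (fun i => f i = j), μ.get i) = q.get j)).card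

/-- `r` is a (strong) refinement of `q` if `r` splits into consecutive blocks whose entries
sum to the successive parts of `q`. -/
def IsRefinement (r q : List ℕ) : Prop :=
  ∃ rs : List (List ℕ), rs.flatten = r ∧ rs.map List.sum = q

/-- `r` is a weak refinement of `q`, written `r ≼ q`: some rearrangement of `r` is a
refinement of `q`. -/
def IsWeakRefinement (r q : List ℕ) : Prop :=
  ∃ r' : List ℕ, r'.Perm r ∧ IsRefinement r' q

/-! A function `f` counted by `φ^q(μ)` sorts the parts of `μ` into the fibres `f⁻¹(j)`, whose
sums are the parts `q_j`; listing the fibres in the order `j = 1, …, k` is a rearrangement of `μ`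
that refines `q`. -/

open Finset

theorem flatten_map_fiber_perm_ofFn {α : Type*} {m k : ℕ} (f : Fin m → Fin k) (g : Fin m → α) :
    ((List.finRange k).map fun j => (univ.filter (f · = j)).toList.map g).flatten.Perm
      (List.ofFn g) := by
  have hfib : ∑ j, (univ.filter (f · = j)).val = (univ : Finset (Fin m)).val := by
    simpa only [sum_multiset_singleton] using sum_fiberwise univ f (fun i => ({i} : Multiset _))
  rw [← Multiset.coe_eq_coe, ← Multiset.coe_join, ← Fin.univ_val_map, ← hfib,
    ← Multiset.coe_mapAddMonoidHom, map_sum, Fin.sum_univ_def, Multiset.join, ← Multiset.sum_coe,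
    List.map_map]
  congr 2
  refine List.map_congr_left fun j _ => ?_
  simp only [Function.comp_apply, ← Multiset.map_coe, coe_toList, Multiset.coe_mapAddMonoidHom]

theorem isWeakRefinement_of_fiber_sum_eq {r q : List ℕ} (f : Fin r.length → Fin q.length)
    (hf : ∀ j, ∑ i ∈ univ.filter (fun i => f i = j), r.get i = q.get j) :
    IsWeakRefinement r q := by
  refine ⟨_, (flatten_map_fiber_perm_ofFn f r.get).trans (by rw [List.ofFn_get]), _, rfl, ?_⟩
  rw [List.map_map]
  refine (List.map_congr_left fun j _ => ?_).trans (List.map_get_finRange q)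
  rw [Function.comp_apply, sum_map_toList, hf]

theorem isWeakRefinement_of_youngChar_ne_zero_general (q μ : List ℕ) (h : youngChar q μ ≠ 0) :
    IsWeakRefinement μ q := by
  obtain ⟨f, hf⟩ := Finset.card_ne_zero.mp h
  exact isWeakRefinement_of_fiber_sum_eq f (Finset.mem_filter.mp hf).2

/-- If `q` is a composition of `n`, `μ` a partition of `n`, and the Young character value
`φ^q(μ)` is nonzero, then `μ` is a weak refinement of `q`, i.e. `μ ≼ q`. -/
theorem isWeakRefinement_of_youngChar_ne_zero (n : ℕ) (q μ : List ℕ)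
    (hq : IsComposition n q) (hμ : IsPartition n μ) (h : youngChar q μ ≠ 0) :
    IsWeakRefinement μ q :=
  isWeakRefinement_of_youngChar_ne_zero_general q μ h

end Descent
end

section
/- Let n ≥ s ≥ 1, let μ be a partition of n−s, and let λ be the partition of n obtained by rearranging in decreasing order the parts of μ together with one extra part equal to s. Then for every composition q of n, Σ_{i : q_i ≥ s} φ^{q^{(i)}}(μ) = φ^{q}(λ), where the sum runs over the indices i with q_i ≥ s. (Equivalently: the pullback along Δ_s of the rank-one D_{n−s}(ℤ)-module M_{μ,ℤ} is isomorphic to M_{λ,ℤ}.) -/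
open scoped Classical TensorProduct

namespace Descent

/-- `q^{(i)}`: the result of subtracting `s` from the `i`-th part of `q`, this part being
deleted if it equals `s`. -/
def reduceAt (l : List ℕ) (i s : ℕ) : List ℕ :=
  l.take i ++ (if l.getD i 0 = s then [] else [l.getD i 0 - s]) ++ l.drop (i + 1)

/-! Sort the maps counted by `φ^q(λ)` according to the part `q_i` that receives the extra part `s`
of `λ`. Removing `s` leaves a map counted by `φ^{q'}(μ)`, where `q'` is `q` with `s` subtracted from
`q_i`. If `q_i = s`, the part `0` of `q'` receives no part of `μ`, since these are positive, so it
may be deleted, which gives `q^{(i)}`. -/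

open Finset Function

section YoungCount

variable {α α' β β' : Type*} [Fintype α] [DecidableEq β] [DecidableEq β']

def IsYoungMap (ν : α → ℕ) (w : β → ℕ) (f : α → β) : Prop :=
  ∀ j, ∑ i with f i = j, ν i = w j

instance [Fintype β] (ν : α → ℕ) (w : β → ℕ) : DecidablePred (IsYoungMap ν w) :=
  fun _ => Fintype.decidableForallFintype

def youngCount [DecidableEq α] [Fintype β] (ν : α → ℕ) (w : β → ℕ) : ℕ :=
  #{f | IsYoungMap ν w f}

theorem isYoungMap_comp_equiv_iff [Fintype α'] (e : α' ≃ α) (ν : α → ℕ) (w : β → ℕ)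
    (f : α' → β) : IsYoungMap (ν ∘ e) w f ↔ IsYoungMap ν w (f ∘ e.symm) := by
  refine forall_congr' fun j => ?_
  rw [sum_filter, sum_filter, ← e.sum_comp]
  simp

theorem youngCount_comp_equiv_left [DecidableEq α] [Fintype α'] [DecidableEq α'] [Fintype β]
    (e : α' ≃ α) (ν : α → ℕ) (w : β → ℕ) : youngCount (ν ∘ e) w = youngCount ν w :=
  card_equiv (e.arrowCongr (Equiv.refl β)) fun f => by
    rw [mem_filter_univ, mem_filter_univ]; exact isYoungMap_comp_equiv_iff e ν w f

theorem IsYoungMap.pos {ν : α → ℕ} {w : β → ℕ} {f : α → β} (hf : IsYoungMap ν w f)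
    (hν : ∀ i, 0 < ν i) (i : α) : 0 < w (f i) := by
  rw [← hf (f i)]
  exact (hν i).trans_le (single_le_sum (fun _ _ => Nat.zero_le _) (by simp))

theorem isYoungMap_embedding_comp_iff {ν : α → ℕ} (e : β' ↪ β) {w : β → ℕ}
    (hw : ∀ j, j ∉ Set.range e → w j = 0) (g : α → β') :
    IsYoungMap ν w (e ∘ g) ↔ IsYoungMap ν (w ∘ e) g := by
  have fiber (j' : β') : ∑ i with e (g i) = e j', ν i = ∑ i with g i = j', ν i := by
    simp only [e.injective.eq_iff]
  refine ⟨fun h j' => (fiber j').symm.trans (h (e j')), fun h j => ?_⟩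
  by_cases hj : j ∈ Set.range e
  · obtain ⟨j', rfl⟩ := hj
    exact (fiber j').trans (h j')
  · rw [hw j hj, sum_eq_zero]
    intro i hi
    exact absurd ⟨g i, (mem_filter.1 hi).2⟩ hj

theorem youngCount_comp_embedding [DecidableEq α] [Fintype β] [Fintype β']
    {ν : α → ℕ} (hν : ∀ i, 0 < ν i) (e : β' ↪ β) {w : β → ℕ}
    (hw : ∀ j, j ∉ Set.range e → w j = 0) : youngCount ν (w ∘ e) = youngCount ν w := by
  refine card_bij (fun g _ => e ∘ g) (fun g hg => ?_) (fun _ _ _ _ h => e.injective.comp_left h)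
    (fun f hf => ?_)
  · rw [mem_filter_univ] at hg ⊢
    exact (isYoungMap_embedding_comp_iff e hw g).2 hg
  · rw [mem_filter_univ] at hf
    have hrange (i : α) : f i ∈ Set.range e := by
      by_contra hi
      exact (hf.pos hν i).ne' (hw _ hi)
    choose g hg using hrange
    have hfg : e ∘ g = f := funext hg
    refine ⟨g, ?_, hfg⟩
    rw [mem_filter_univ, ← isYoungMap_embedding_comp_iff e hw, hfg]
    exact hf

theorem youngCount_comp_equiv_right [DecidableEq α] [Fintype β] [Fintype β'] {ν : α → ℕ}
    (hν : ∀ i, 0 < ν i) (e : β' ≃ β) (w : β → ℕ) : youngCount ν (w ∘ e) = youngCount ν w :=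
  youngCount_comp_embedding hν e.toEmbedding fun j hj => (hj (e.surjective j)).elim

theorem isYoungMap_cons_iff {m : ℕ} (s : ℕ) (ν : Fin m → ℕ) (w : β → ℕ) (f : Fin (m + 1) → β) :
    IsYoungMap (Fin.cons s ν : Fin (m + 1) → ℕ) w f ↔
      s ≤ w (f 0) ∧ IsYoungMap ν (update w (f 0) (w (f 0) - s)) (Fin.tail f) := by
  have fiber (j : β) : ∑ i with f i = j, (Fin.cons s ν : Fin (m + 1) → ℕ) i =
      (if f 0 = j then s else 0) + ∑ i with Fin.tail f i = j, ν i := by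
    rw [sum_filter, sum_filter, Fin.sum_univ_succ]
    simp only [Fin.cons_zero, Fin.cons_succ]
    rfl
  simp only [IsYoungMap, fiber]
  refine ⟨fun h => ⟨?_, fun j => ?_⟩, fun ⟨hs, h⟩ j => ?_⟩
  · have := h (f 0)
    rw [if_pos rfl] at this
    omega
  · have := h j
    rcases eq_or_ne j (f 0) with rfl | hne
    · rw [if_pos rfl] at this
      rw [update_self]
      omega
    · rw [update_of_ne hne]
      rwa [if_neg hne.symm, zero_add] at this
  · have := h j
    rcases eq_or_ne j (f 0) with rfl | hne
    · rw [update_self] at this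
      rw [if_pos rfl]
      omega
    · rw [update_of_ne hne] at this
      rw [if_neg hne.symm, zero_add, this]

theorem youngCount_cons [Fintype β] {m : ℕ} (s : ℕ) (ν : Fin m → ℕ) (w : β → ℕ) :
    youngCount (Fin.cons s ν : Fin (m + 1) → ℕ) w =
      ∑ j with s ≤ w j, youngCount ν (update w j (w j - s)) := by
  unfold youngCount
  rw [card_eq_sum_card_fiberwise (f := fun f => f 0) (t := univ) (by simp), sum_filter]
  refine sum_congr rfl fun j _ => ?_
  simp only [filter_filter, isYoungMap_cons_iff]
  split_ifs with hj
  · refine card_nbij' Fin.tail (fun g => (Fin.cons j g : Fin (m + 1) → β)) (fun f hf => ?_)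
      (fun g hg => ?_) (fun f hf => ?_) (fun g _ => Fin.tail_cons (α := fun _ => β) j g)
    · simp only [coe_filter, mem_univ, true_and, Set.mem_ofPred_eq] at hf ⊢
      exact hf.2 ▸ hf.1.2
    · simp_all
    · simp only [coe_filter, mem_univ, true_and, Set.mem_ofPred_eq] at hf
      exact hf.2 ▸ Fin.cons_self_tail f
  · refine card_eq_zero.2 (filter_eq_empty_iff.2 fun f _ hf => hj ?_)
    exact hf.2 ▸ hf.1.1

end YoungCount

theorem exists_equiv_get_of_perm {γ : Type*} {l l' : List γ} (h : l.Perm l') :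
    ∃ e : Fin l.length ≃ Fin l'.length, ∀ i, l'.get (e i) = l.get i := by
  induction h with
  | nil => exact ⟨Equiv.refl _, fun _ => rfl⟩
  | cons a _ ih =>
    obtain ⟨e, he⟩ := ih
    refine ⟨(finSuccEquiv _).trans ((Equiv.optionCongr e).trans (finSuccEquiv _).symm),
      Fin.cases rfl fun i => ?_⟩
    simpa using he i
  | swap x y l =>
    refine ⟨Equiv.swap 0 1, fun i => ?_⟩
    rcases i with ⟨_ | _ | k, hk⟩ <;> rfl
  | trans _ _ ih₁ ih₂ =>
    obtain ⟨e₁, he₁⟩ := ih₁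
    obtain ⟨e₂, he₂⟩ := ih₂
    exact ⟨e₁.trans e₂, fun i => (he₂ _).trans (he₁ i)⟩

theorem get_cons_eq_fin_cons {γ : Type*} (a : γ) (l : List γ) :
    (a :: l).get = Fin.cons a l.get := by
  funext i
  cases i using Fin.cases <;> rfl

section YoungChar

variable {q q' μ μ' : List ℕ}

theorem youngChar_eq_youngCount (q μ : List ℕ) : youngChar q μ = youngCount μ.get q.get := by
  -- not `rfl`: the decidability instances of the outer filters differ
  unfold youngChar youngCount IsYoungMap
  congr

theorem youngChar_perm_right (h : μ.Perm μ') : youngChar q μ = youngChar q μ' := by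
  obtain ⟨e, he⟩ := exists_equiv_get_of_perm h
  rw [youngChar_eq_youngCount, youngChar_eq_youngCount, ← youngCount_comp_equiv_left e]
  exact congrArg (youngCount · _) (funext he).symm

theorem youngChar_perm_left (hμ : ∀ x ∈ μ, 0 < x) (h : q.Perm q') :
    youngChar q μ = youngChar q' μ := by
  obtain ⟨e, he⟩ := exists_equiv_get_of_perm h
  rw [youngChar_eq_youngCount, youngChar_eq_youngCount,
    ← youngCount_comp_equiv_right (fun i => hμ _ (μ.get_mem i)) e]
  exact congrArg (youngCount _) (funext he).symm

theorem youngChar_zero_cons (hμ : ∀ x ∈ μ, 0 < x) (q : List ℕ) :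
    youngChar (0 :: q) μ = youngChar q μ := by
  rw [youngChar_eq_youngCount, youngChar_eq_youngCount, get_cons_eq_fin_cons,
    ← youngCount_comp_embedding (fun i => hμ _ (μ.get_mem i)) (Fin.succEmb _)]
  · rfl
  · intro j hj
    cases j using Fin.cases with
    | zero => rfl
    | succ j => exact (hj ⟨j, rfl⟩).elim

theorem youngChar_set_left (hμ : ∀ x ∈ μ, 0 < x) (i : Fin q.length) (x : ℕ) :
    youngChar (q.set i x) μ = youngCount μ.get (update q.get i x) := by
  rw [youngChar_eq_youngCount, ← youngCount_comp_equiv_right (fun i => hμ _ (μ.get_mem i))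
    (finCongr (List.length_set (as := q) (i := i) (a := x)))]
  congr 1
  funext k
  simp [List.getElem_set, update_apply, Fin.ext_iff, eq_comm]

theorem youngChar_reduceAt (hμ : ∀ x ∈ μ, 0 < x) {i : ℕ} (hi : i < q.length) (s : ℕ) :
    youngChar (reduceAt q i s) μ = youngChar (q.set i (q[i] - s)) μ := by
  rw [List.set_eq_take_cons_drop _ hi, reduceAt, List.getD_eq_getElem _ _ hi]
  split_ifs with h
  · rw [h, Nat.sub_self, youngChar_perm_left hμ List.perm_middle, youngChar_zero_cons hμ]
    simp
  · simp

theorem youngChar_cons_right (q μ : List ℕ) (s : ℕ) :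
    youngChar q (s :: μ) =
      ∑ j with s ≤ q.get j, youngCount μ.get (update q.get j (q.get j - s)) := by
  rw [youngChar_eq_youngCount, get_cons_eq_fin_cons, youngCount_cons]

end YoungChar

theorem sum_youngChar_reduceAt_general (n s : ℕ) (μ lam : List ℕ)
    (hμ : IsPartition (n - s) μ)
    (hperm : lam.Perm (μ ++ [s])) :
    ∀ q : List ℕ, IsComposition n q →
      (∑ i ∈ (Finset.range q.length).filter (fun i => s ≤ q.getD i 0),
        youngChar (reduceAt q i s) μ) = youngChar q lam := by
  intro q _
  have hμpos : ∀ x ∈ μ, 0 < x := hμ.1.1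
  rw [youngChar_perm_right (hperm.trans (List.perm_append_singleton s μ)), youngChar_cons_right,
    sum_filter, sum_filter, sum_range]
  refine sum_congr rfl fun j _ => ?_
  rw [List.getD_eq_getElem _ _ j.isLt, youngChar_reduceAt hμpos j.isLt, youngChar_set_left hμpos]
  rfl

/-- Let `n ≥ s ≥ 1`, `μ` a partition of `n - s`, and `λ` the partition of `n` obtained by
rearranging in decreasing order the parts of `μ` together with one extra part equal to `s`.
Then for every composition `q` of `n`, `Σ_{i : q_i ≥ s} φ^{q^{(i)}}(μ) = φ^q(λ)`. -/
theorem sum_youngChar_reduceAt (n s : ℕ) (hs : 1 ≤ s) (hn : s ≤ n) (μ lam : List ℕ)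
    (hμ : IsPartition (n - s) μ) (hlam : IsPartition n lam)
    (hperm : lam.Perm (μ ++ [s])) :
    ∀ q : List ℕ, IsComposition n q →
      (∑ i ∈ (Finset.range q.length).filter (fun i => s ≤ q.getD i 0),
        youngChar (reduceAt q i s) μ) = youngChar q lam :=
  sum_youngChar_reduceAt_general n s μ lam hμ hperm

end Descent
end

section
/- Fix a prime p and an integer s ≥ 1. The map μ ↦ μ^{#s} on p-regular partitions is injective: if μ and η are p-regular partitions of the same integer n with μ^{#s} = η^{#s}, then μ = η. -/
open scoped Classical TensorProduct

namespace Descent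

/-- The multiset obtained from a partition by replacing every part `m = p^a·m′` with
`p ∤ m′` by `p^a` copies of `m′`. -/
def pExpand (p : ℕ) (l : List ℕ) : Multiset ℕ :=
  (l : Multiset ℕ).bind fun m =>
    Multiset.replicate (p ^ (m.factorization p)) (m / p ^ (m.factorization p))

/-- `p`-equivalence of partitions, `λ ∼_p μ`. -/
def PEquiv (p : ℕ) (l₁ l₂ : List ℕ) : Prop :=
  pExpand p l₁ = pExpand p l₂

end Descent

/-!
Adding the part `s` adds the same multiset to both expansions, so `μ ∼_p η`. A `p`-regular
partition is recovered from its expansion: for `m` prime to `p`, the multiplicity of `m` in the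
expansion is `∑ₐ cₐ pᵃ`, where `cₐ < p` is the multiplicity of the part `pᵃ m`, so the `cₐ` are
the base-`p` digits of that multiplicity.
-/

theorem Nat.ofDigits_map_range (b K : ℕ) (f : ℕ → ℕ) :
    Nat.ofDigits b ((List.range K).map f) = ∑ a ∈ Finset.range K, f a * b ^ a := by
  induction K with
  | zero => simp
  | succ K ih =>
    rw [List.range_succ, List.map_append, Nat.ofDigits_append, ih, Finset.sum_range_succ]
    simp [Nat.ofDigits_singleton, mul_comm]

theorem Nat.eq_of_sum_mul_pow_eq {b K : ℕ} (hb : 1 < b) {f g : ℕ → ℕ}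
    (hf : ∀ a < K, f a < b) (hg : ∀ a < K, g a < b)
    (h : ∑ a ∈ Finset.range K, f a * b ^ a = ∑ a ∈ Finset.range K, g a * b ^ a) :
    ∀ a < K, f a = g a := by
  rw [← Nat.ofDigits_map_range, ← Nat.ofDigits_map_range] at h
  have hfg := Nat.ofDigits_inj_of_len_eq hb (by simp) (by simpa using hf) (by simpa using hg) h
  intro a ha
  exact List.map_inj_left.mp hfg a (List.mem_range.mpr ha)

theorem Nat.pow_mul_eq_iff_of_not_dvd {p a m x : ℕ} (hp : p.Prime) (hm : ¬ p ∣ m) :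
    p ^ a * m = x ↔ a = x.factorization p ∧ m = ordCompl[p] x := by
  constructor
  · rintro rfl
    rw [Nat.ordCompl_pow_mul_of_not_dvd a hp hm, Nat.factorization_mul (pow_ne_zero a hp.ne_zero)
      (by rintro rfl; exact hm (dvd_zero p))]
    simp [hp.factorization_pow, Nat.factorization_eq_zero_of_not_dvd hm]
  · rintro ⟨rfl, rfl⟩
    exact Nat.ordProj_mul_ordCompl_eq_self x p

namespace Descent

theorem pExpand_cons (p x : ℕ) (l : List ℕ) :
    pExpand p (x :: l) =
      Multiset.replicate (p ^ x.factorization p) (ordCompl[p] x) + pExpand p l := by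
  rw [pExpand, ← Multiset.cons_coe, Multiset.cons_bind, pExpand]

theorem pExpand_append (p : ℕ) (l₁ l₂ : List ℕ) :
    pExpand p (l₁ ++ l₂) = pExpand p l₁ + pExpand p l₂ := by
  simp [pExpand, ← Multiset.coe_add, Multiset.add_bind]

theorem PEquiv.of_append_right {p : ℕ} {l₁ l₂ l : List ℕ}
    (h : PEquiv p (l₁ ++ l) (l₂ ++ l)) : PEquiv p l₁ l₂ := by
  unfold PEquiv at h
  rwa [pExpand_append, pExpand_append, add_left_inj] at h

theorem count_pExpand {p m K : ℕ} (hp : p.Prime) (hm : ¬ p ∣ m) {l : List ℕ}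
    (hK : ∀ x ∈ l, x.factorization p < K) :
    (pExpand p l).count m = ∑ a ∈ Finset.range K, l.count (p ^ a * m) * p ^ a := by
  induction l with
  | nil => simp [pExpand]
  | cons x l ih =>
    have hx : (Multiset.replicate (p ^ x.factorization p) (ordCompl[p] x)).count m =
        ∑ a ∈ Finset.range K, if p ^ a * m = x then p ^ a else 0 := by
      simp only [Nat.pow_mul_eq_iff_of_not_dvd hp hm, ite_and, Finset.sum_ite_eq',
        Finset.mem_range, hK x List.mem_cons_self, if_true, Multiset.count_replicate, eq_comm]
    rw [pExpand_cons, Multiset.count_add, hx, ih fun y hy => hK y (List.mem_cons_of_mem x hy),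
      ← Finset.sum_add_distrib]
    refine Finset.sum_congr rfl fun a _ => ?_
    simp only [List.count_cons, beq_iff_eq, add_mul, ite_mul, one_mul, zero_mul, eq_comm (a := x),
      add_comm]

theorem IsPRegular.count_lt {p : ℕ} {l : List ℕ} (h : IsPRegular p l) (hp : 0 < p) (x : ℕ) :
    l.count x < p := by
  by_cases hx : x ∈ l
  · exact h x hx
  · rwa [List.count_eq_zero_of_not_mem hx]

theorem PEquiv.perm_of_isPRegular {p : ℕ} (hp : p.Prime) {l₁ l₂ : List ℕ}
    (h₁pos : ∀ x ∈ l₁, 0 < x) (h₂pos : ∀ x ∈ l₂, 0 < x)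
    (h₁reg : IsPRegular p l₁) (h₂reg : IsPRegular p l₂) (h : PEquiv p l₁ l₂) :
    l₁.Perm l₂ := by
  refine List.perm_iff_count.mpr fun x => ?_
  rcases Nat.eq_zero_or_pos x with rfl | hx
  · rw [List.count_eq_zero_of_not_mem (fun h0 => (h₁pos 0 h0).false),
      List.count_eq_zero_of_not_mem (fun h0 => (h₂pos 0 h0).false)]
  set K := l₁.sum + l₂.sum + x
  have hvK : ∀ y, 0 < y → y ≤ K → y.factorization p < K :=
    fun y hy hyK => (Nat.factorization_lt p hy.ne').trans_le hyK
  have hK₁ : ∀ y ∈ l₁, y.factorization p < K := fun y hy =>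
    hvK y (h₁pos y hy) ((List.le_sum_of_mem hy).trans (by omega))
  have hK₂ : ∀ y ∈ l₂, y.factorization p < K := fun y hy =>
    hvK y (h₂pos y hy) ((List.le_sum_of_mem hy).trans (by omega))
  have hm : ¬ p ∣ ordCompl[p] x := Nat.not_dvd_ordCompl hp hx.ne'
  have hdigits := Nat.eq_of_sum_mul_pow_eq hp.one_lt
    (fun a _ => h₁reg.count_lt hp.pos (p ^ a * ordCompl[p] x))
    (fun a _ => h₂reg.count_lt hp.pos (p ^ a * ordCompl[p] x))
    (by rw [← count_pExpand hp hm hK₁, ← count_pExpand hp hm hK₂, h])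
  rw [← Nat.ordProj_mul_ordCompl_eq_self x p]
  exact hdigits _ (hvK x hx (by omega))

theorem sharp_injective_general (p : ℕ) (hp : p.Prime) (s : ℕ) (n : ℕ)
    (μ η : List ℕ) (hμ : IsPartition n μ) (hη : IsPartition n η)
    (hμreg : IsPRegular p μ) (hηreg : IsPRegular p η)
    (ν : List ℕ)
    (h1 : PEquiv p ν (μ ++ [s])) (h2 : PEquiv p ν (η ++ [s])) :
    μ = η := by
  have hμη : PEquiv p μ η := PEquiv.of_append_right (h1.symm.trans h2)
  exact (hμη.perm_of_isPRegular hp hμ.1.1 hη.1.1 hμreg hηreg).eq_of_pairwise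
    (fun a b _ _ hab hba => le_antisymm hba hab) hμ.2 hη.2

/-- Fix a prime `p` and `s ≥ 1`.  The map `μ ↦ μ^{#s}` on `p`-regular partitions is
injective: if `μ` and `η` are `p`-regular partitions of the same integer `n` whose
`#s`-images agree (i.e. some `p`-regular partition `ν` is `p`-equivalent both to `μ` with
an extra part `s` added and to `η` with an extra part `s` added), then `μ = η`. -/
theorem sharp_injective (p : ℕ) (hp : p.Prime) (s : ℕ) (hs : 1 ≤ s) (n : ℕ)
    (μ η : List ℕ) (hμ : IsPartition n μ) (hη : IsPartition n η)
    (hμreg : IsPRegular p μ) (hηreg : IsPRegular p η)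
    (ν : List ℕ) (hν : IsPartition (n + s) ν) (hνreg : IsPRegular p ν)
    (h1 : PEquiv p ν (μ ++ [s])) (h2 : PEquiv p ν (η ++ [s])) :
    μ = η :=
  sharp_injective_general p hp s n μ η hμ hη hμreg hηreg ν h1 h2

end Descent
end
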